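/- Let a be an anti-symmetric separately radial function, i.e., a(z) = a(|z_1|,...,|z_n|) and a(σ(z)) = Sgn(σ) a(z) for all σ ∈ S_n. If ι ∈ ℤ_+^n has two equal entries (ι_{l_1} = ι_{l_2} for some l_1 ≠ l_2), then the Toeplitz operator eigenvalue γ_a(m) = ⟨T_a e_m, e_m⟩ vanishes for every m in the S_n-orbit of ι. -/

import Mathlib

noncomputable section
open MeasureTheory

/-- The open unit ball in `ℂⁿ`. -/
def cball (n : ℕ) : Set (Fin n → ℂ) := {z | ∑ i, ‖z i‖ ^ 2 < 1}

/-- Normalized Lebesgue measure `dv` on `ℂⁿ`, so that the unit ball has measure 1. -/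
def dv (n : ℕ) : Measure (Fin n → ℂ) :=
  (ENNReal.ofReal ((n.factorial : ℝ) / Real.pi ^ n)) • volume

/-- The normalizing constant `c_α`. -/
def cA (n : ℕ) (α : ℝ) : ℝ :=
  Real.Gamma (n + α + 1) / ((n.factorial : ℝ) * Real.Gamma (α + 1))

/-- The weighted measure `v_α = c_α (1-|z|²)^α dv(z)` on the unit ball. -/
def vA (n : ℕ) (α : ℝ) : Measure (Fin n → ℂ) :=
  ((dv n).restrict (cball n)).withDensity
    (fun z => ENNReal.ofReal (cA n α * (1 - ∑ i, ‖z i‖ ^ 2) ^ α))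

/-- The monomial `z^m`. -/
def mon (n : ℕ) (m : Fin n → ℕ) : (Fin n → ℂ) → ℂ := fun z => ∏ i, z i ^ m i

/-- The normalized monomial `e_m`. -/
def eMon (n : ℕ) (α : ℝ) (m : Fin n → ℕ) : (Fin n → ℂ) → ℂ := fun z =>
  (Real.sqrt (Real.Gamma (n + (∑ i, m i) + α + 1) /
      ((∏ i, (m i).factorial : ℕ) * Real.Gamma (n + α + 1))) : ℝ) * ∏ i, z i ^ m i

/-! The transposition `τ` exchanging two coordinates on which `m` takes the same value fixes
`e_m` and preserves `v_α`, while `a ∘ τ = -a`. Hence the integrand of `⟨T_a e_m, e_m⟩` is odd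
under the measure-preserving map `z ↦ z ∘ τ`, and its integral vanishes. -/

lemma measurableSet_cball (n : ℕ) : MeasurableSet (cball n) :=
  measurableSet_lt (Finset.measurable_sum _ fun i _ =>
    (measurable_pi_apply i).norm.pow_const 2) measurable_const

lemma MeasureTheory.MeasurePreserving.withDensity_of_comp_eq {β : Type*} [MeasurableSpace β]
    {μ : Measure β} {T : β → β} (hT : MeasurePreserving T μ μ) {g : β → ENNReal}
    (hg : Measurable g) (hgT : ∀ x, g (T x) = g x) :
    MeasurePreserving T (μ.withDensity g) (μ.withDensity g) := by
  refine ⟨hT.measurable, ?_⟩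
  ext s hs
  rw [Measure.map_apply hT.measurable hs, withDensity_apply _ hs,
    withDensity_apply _ (hT.measurable hs), ← hT.setLIntegral_comp_preimage hs hg]
  simp only [hgT]

lemma MeasureTheory.integral_eq_zero_of_comp_eq_neg {β E : Type*} [MeasurableSpace β]
    [NormedAddCommGroup E] [NormedSpace ℝ E] {μ : Measure β} (T : β ≃ᵐ β)
    (hT : MeasurePreserving T μ μ) {f : β → E} (hf : ∀ x, f (T x) = -f x) :
    ∫ x, f x ∂μ = 0 := by
  have h : ∫ x, f x ∂μ = -∫ x, f x ∂μ := by
    rw [← integral_neg, ← hT.integral_comp T.measurableEmbedding]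
    simp only [hf]
  linear_combination (norm := module) (2⁻¹ : ℝ) • h

def permCoords {ι β : Type*} [MeasurableSpace β] (σ : Equiv.Perm ι) : (ι → β) ≃ᵐ (ι → β) :=
  MeasurableEquiv.piCongrLeft (fun _ => β) σ.symm

@[simp]
lemma permCoords_apply {ι β : Type*} [MeasurableSpace β] (σ : Equiv.Perm ι) (z : ι → β) :
    permCoords σ z = fun i => z (σ i) := by
  funext i
  simp [permCoords, MeasurableEquiv.coe_piCongrLeft, Equiv.piCongrLeft_apply]

section permCoords

variable {n : ℕ} (σ : Equiv.Perm (Fin n))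

lemma sum_norm_sq_permCoords (z : Fin n → ℂ) :
    ∑ i, ‖permCoords σ z i‖ ^ 2 = ∑ i, ‖z i‖ ^ 2 := by
  simpa using Equiv.sum_comp σ (fun i => ‖z i‖ ^ 2)

lemma measurePreserving_permCoords_dv : MeasurePreserving (permCoords σ) (dv n) (dv n) :=
  (volume_measurePreserving_piCongrLeft (fun _ => ℂ) σ.symm).smul_measure _

lemma measurePreserving_permCoords_vA (α : ℝ) :
    MeasurePreserving (permCoords σ) (vA n α) (vA n α) := by
  have hball : permCoords σ ⁻¹' cball n = cball n := by
    ext z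
    simp only [Set.mem_preimage, cball, Set.mem_ofPred_eq, sum_norm_sq_permCoords]
  have hres := (measurePreserving_permCoords_dv σ).restrict_preimage (measurableSet_cball n)
  rw [hball] at hres
  exact hres.withDensity_of_comp_eq (by fun_prop) fun z => by rw [sum_norm_sq_permCoords]

lemma eMon_permCoords {α : ℝ} {m : Fin n → ℕ} (hm : ∀ i, m (σ i) = m i) (z : Fin n → ℂ) :
    eMon n α m (permCoords σ z) = eMon n α m z := by
  simp only [eMon, permCoords_apply]
  congr 1
  calc ∏ i, z (σ i) ^ m i = ∏ i, z (σ i) ^ m (σ i) := by simp only [hm]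
    _ = ∏ i, z i ^ m i := Equiv.prod_comp σ (fun i => z i ^ m i)

end permCoords

theorem toeplitz_antisymm_eigenvalue_vanishes_general (n : ℕ) (α : ℝ)
    (a : (Fin n → ℂ) → ℂ)
    (hanti : ∀ (σ : Equiv.Perm (Fin n)) (z : Fin n → ℂ),
      a (fun i => z (σ i)) = ((Equiv.Perm.sign σ : ℤ) : ℂ) * a z)
    (ι : Fin n → ℕ) (hrep : ∃ l₁ l₂ : Fin n, l₁ ≠ l₂ ∧ ι l₁ = ι l₂)
    (m : Fin n → ℕ) (hm : ∃ σ : Equiv.Perm (Fin n), m = fun i => ι (σ i)) :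
    ∫ z, a z * eMon n α m z * (starRingEnd ℂ) (eMon n α m z) ∂(vA n α) = 0 := by
  obtain ⟨l₁, l₂, hne, heq⟩ := hrep
  obtain ⟨σ, rfl⟩ := hm
  set τ := Equiv.swap (σ.symm l₁) (σ.symm l₂)
  have hsign : Equiv.Perm.sign τ = -1 := Equiv.Perm.sign_swap (σ.symm.injective.ne hne)
  have hfix : ∀ i, ι (σ (τ i)) = ι (σ i) :=
    Equiv.apply_swap_eq_self (v := fun i => ι (σ i)) (by simpa using heq)
  refine integral_eq_zero_of_comp_eq_neg (permCoords τ)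
    (measurePreserving_permCoords_vA τ α) fun z => ?_
  rw [eMon_permCoords τ hfix, permCoords_apply, hanti, hsign]
  push_cast
  ring

/-- For an anti-symmetric separately radial bounded symbol `a`, the Toeplitz eigenvalue
`γ_a(m) = ⟨T_a e_m, e_m⟩` vanishes on every `m` in the `Sₙ`-orbit of a multi-index `ι`
having two equal entries. -/
theorem toeplitz_antisymm_eigenvalue_vanishes (n : ℕ) (α : ℝ) (hα : -1 < α)
    (a : (Fin n → ℂ) → ℂ) (hmeas : Measurable a) (hbd : ∃ C, ∀ z, ‖a z‖ ≤ C)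
    (hrad : ∀ z w : Fin n → ℂ, (∀ i, ‖z i‖ = ‖w i‖) → a z = a w)
    (hanti : ∀ (σ : Equiv.Perm (Fin n)) (z : Fin n → ℂ),
      a (fun i => z (σ i)) = ((Equiv.Perm.sign σ : ℤ) : ℂ) * a z)
    (ι : Fin n → ℕ) (hrep : ∃ l₁ l₂ : Fin n, l₁ ≠ l₂ ∧ ι l₁ = ι l₂)
    (m : Fin n → ℕ) (hm : ∃ σ : Equiv.Perm (Fin n), m = fun i => ι (σ i)) :
    ∫ z, a z * eMon n α m z * (starRingEnd ℂ) (eMon n α m z) ∂(vA n α) = 0 :=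
  toeplitz_antisymm_eigenvalue_vanishes_general n α a hanti ι hrep m hm
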